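/- arXiv:2501.11656 — 2 statements merged into one kernel-verified Lean document; each statement's English description precedes it below -/
import Mathlib

section
/- Under Hypothesis (H1), the function x ↦ log‖df(x)^{−1}‖ is Lebesgue-integrable near the critical set: there is a constant K > 0 such that for all sufficiently small δ > 0, ∫_{B_δ(C)} |log‖df(x)^{−1}‖| dx ≤ K δ log(1/δ); in particular log‖df(·)^{−1}‖ ∈ L^1 of any measure on X with bounded density with respect to Lebesgue measure. -/
/-!
Because `‖df‖` and `‖df⁻¹‖` are controlled by `B · dist(x, 𝒞)^{±β}`, one has
`|log ‖df⁻¹(x)‖| ≤ log B + β |log dist(x, 𝒞)|`. The critical set is covered by finitely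
many Lipschitz images of the cube `[0,1]^{d-1}`; covering the cube by a grid of mesh `r`
gives `vol(B_r(𝒞)) ≤ C r`, so in particular `closure 𝒞` is Lebesgue-null. The layer-cake
formula then bounds `∫_{B_δ(𝒞)} -log dist(x, 𝒞) dx` by
`∫_0^∞ C min(δ, e^{-t}) dt = C δ (log(1/δ) + 1)`. Away from `B_δ(𝒞)` the function is
continuous on a compact set, hence integrable, and a measure with bounded density inherits
integrability from Lebesgue measure on `X`.
-/

open MeasureTheory Metric Set Filter
open scoped ENNReal NNReal symmDiff

noncomputable section

/-- Euclidean state space `ℝ^d`. -/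
abbrev Ed (d : ℕ) := EuclideanSpace ℝ (Fin d)

/-- The noise cube `[-σ, σ]^d`. -/
def cube (d : ℕ) (σ : ℝ) : Set (Ed d) := {w | ∀ i, |w i| ≤ σ}

/-- The sup-norm cube of radius `σ` centred at `c`. -/
def cubeAt (d : ℕ) (c : Ed d) (σ : ℝ) : Set (Ed d) := {z | ∀ i, |z i - c i| ≤ σ}

/-- The uniform (normalized Lebesgue) probability measure on the noise cube. -/
def noiseMeasure (d : ℕ) (σ : ℝ) : Measure (Ed d) :=
  (volume (cube d σ))⁻¹ • volume.restrict (cube d σ)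

instance {d : ℕ} {σ : ℝ} : SFinite (noiseMeasure d σ) := by
  unfold noiseMeasure; infer_instance

/-- The one-sided shift on noise sequences. -/
def shft {d : ℕ} (ω : ℕ → Ed d) : ℕ → Ed d := fun n => ω (n + 1)

/-- Random compositions `f^n_ω(x)`, where `f_ω(x) = f(x) + ω 0`. -/
def RComp {d : ℕ} (f : Ed d → Ed d) : ℕ → (ℕ → Ed d) → Ed d → Ed d
  | 0, _, x => x
  | n + 1, ω, x => f (RComp f n ω x) + ω n

/-- The derivative cocycle `d f^n_ω (x)` built from a candidate derivative `Df`. -/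
def DComp {d : ℕ} (f : Ed d → Ed d) (Df : Ed d → Ed d →L[ℝ] Ed d) :
    ℕ → (ℕ → Ed d) → Ed d → (Ed d →L[ℝ] Ed d)
  | 0, _, _ => ContinuousLinearMap.id ℝ (Ed d)
  | n + 1, ω, x => (Df (RComp f n ω x)).comp (DComp f Df n ω x)

/-- The inverse derivative cocycle `(d f^n_ω (x))⁻¹`. -/
def DCompInv {d : ℕ} (f : Ed d → Ed d) (DfInv : Ed d → Ed d →L[ℝ] Ed d) :
    ℕ → (ℕ → Ed d) → Ed d → (Ed d →L[ℝ] Ed d)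
  | 0, _, _ => ContinuousLinearMap.id ℝ (Ed d)
  | n + 1, ω, x => (DCompInv f DfInv n ω x).comp (DfInv (RComp f n ω x))

/-- The `δ`-truncated distance to the critical set. -/
def distTrunc {d : ℕ} (Crit : Set (Ed d)) (δ : ℝ) (x : Ed d) : ℝ :=
  if δ < infDist x Crit then 1 else infDist x Crit

/-- Hypothesis (H1): regularity of `f` away from the critical set and structure and
non-degeneracy of the critical set. -/
structure H1Data (d : ℕ) where
  X : Set (Ed d)
  f : Ed d → Ed d
  Crit : Set (Ed d)
  Df : Ed d → Ed d →L[ℝ] Ed d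
  DfInv : Ed d → Ed d →L[ℝ] Ed d
  B : ℝ
  β : ℝ
  compact_X : IsCompact X
  cont_f : ContinuousOn f X
  one_lt_B : 1 < B
  beta_pos : 0 < β
  deriv : ∀ x ∈ X \ Crit, HasFDerivWithinAt f (Df x) X x
  inv_left : ∀ x ∈ X \ Crit, (DfInv x).comp (Df x) = ContinuousLinearMap.id ℝ (Ed d)
  inv_right : ∀ x ∈ X \ Crit, (Df x).comp (DfInv x) = ContinuousLinearMap.id ℝ (Ed d)
  deriv_bound : ∀ x ∈ X \ Crit, ∀ v : Ed d,
    B⁻¹ * infDist x Crit ^ β * ‖v‖ ≤ ‖Df x v‖ ∧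
      ‖Df x v‖ ≤ B * infDist x Crit ^ (-β) * ‖v‖
  logHolder_inv : ∀ x ∈ X \ Crit, ∀ y ∈ X \ Crit, dist x y ≤ infDist x Crit / 2 →
    |Real.log ‖DfInv x‖ - Real.log ‖DfInv y‖| ≤ B / infDist x Crit ^ β * dist x y
  logHolder_det : ∀ x ∈ X \ Crit, ∀ y ∈ X \ Crit, dist x y ≤ infDist x Crit / 2 →
    |Real.log (abs (Df x).det) - Real.log (abs (Df y).det)| ≤ B / infDist x Crit ^ β * dist x y
  crit_structure : ∃ (m : ℕ) (g : Fin m → ((Fin (d - 1) → ℝ) → Ed d)) (L : ℝ≥0),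
    (∀ i, ContDiff ℝ 1 (g i)) ∧ (∀ i, LipschitzWith L (g i)) ∧
    Crit ⊆ ⋃ i, g i '' (Set.univ.pi fun _ => Set.Icc (0 : ℝ) 1)

/-- iid uniform noise: cylinder events have product probabilities. -/
def IsIIDNoise {d : ℕ} (σn : ℝ) (P : Measure (ℕ → Ed d)) : Prop :=
  ∀ (m : ℕ) (s : Fin m → Set (Ed d)), (∀ i, MeasurableSet (s i)) →
    P {ω | ∀ i : Fin m, ω i.1 ∈ s i} = ∏ i, noiseMeasure d σn (s i)

/-- Hypothesis (H2): an invariant ergodic component `Y` carrying a stationary ergodic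
measure `μ` with `λ = ∫ log ‖df⁻¹‖ dμ < 0` (all Lyapunov exponents positive). -/
structure H2Data {d : ℕ} (D : H1Data d) (σn : ℝ) (P : Measure (ℕ → Ed d)) where
  Y : Set (Ed d)
  μ : ProbabilityMeasure (Ed d)
  subset_X : Y ⊆ D.X
  full : (μ : Measure (Ed d)) Y = 1
  stationary :
    Measure.map (fun p : Ed d × Ed d => D.f p.2 + p.1)
      ((noiseMeasure d σn).prod (μ : Measure (Ed d))) = (μ : Measure (Ed d))
  invariantY : ∀ x ∈ Y, ∀ᵐ w ∂(noiseMeasure d σn), D.f x + w ∈ Y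
  ergodic :
    Ergodic (fun p : (ℕ → Ed d) × Ed d => (shft p.1, D.f p.2 + p.1 0))
      (P.prod (μ : Measure (Ed d)))
  neg_lyap : ∫ x, Real.log ‖D.DfInv x‖ ∂(μ : Measure (Ed d)) < 0

/-- `n` is a `(σ'², r)`-hyperbolic time for `(ω, x)` (with recurrence exponent `b`). -/
def IsHypTime {d : ℕ} (f : Ed d → Ed d) (DfInv : Ed d → Ed d →L[ℝ] Ed d)
    (Crit : Set (Ed d)) (σ' r b : ℝ) (ω : ℕ → Ed d) (x : Ed d) (n : ℕ) : Prop :=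
  ∀ k < n,
    (∏ i ∈ Finset.Ico k n, ‖DfInv (RComp f i ω x)‖) ≤ σ' ^ (2 * (n - k)) ∧
    σ' ^ (b * ((n - k : ℕ) : ℝ)) ≤ distTrunc Crit r (RComp f (n - k) ω x)

/-- Greedy `N`-sparse selection from a set `H ⊆ ℕ` of times (`⊤` if exhausted). -/
def sparseTimes (H : Set ℕ) (N : ℕ) : ℕ → ℕ∞
  | 0 => sInf ((fun m : ℕ => (m : ℕ∞)) '' H)
  | k + 1 => sInf ((fun m : ℕ => (m : ℕ∞)) ''
      {m : ℕ | m ∈ H ∧ sparseTimes H N k + (N : ℕ∞) < (m : ℕ∞)})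

/-- `i` is an `N`-sparse `(σ'², r)`-hyperbolic time for `(ω, x)`. -/
def IsSparseHypTime {d : ℕ} (f : Ed d → Ed d) (DfInv : Ed d → Ed d →L[ℝ] Ed d)
    (Crit : Set (Ed d)) (σ' r b : ℝ) (N : ℕ) (ω : ℕ → Ed d) (x : Ed d) (i : ℕ) : Prop :=
  ∃ k : ℕ, sparseTimes {n : ℕ | IsHypTime f DfInv Crit σ' r b ω x n} N k = (i : ℕ∞)

/-- The event `E_J(I, N, ι)`: some ball `Ĩ ⊆ I` covers `J` within time `N`,
staying `ι`-away from the critical set. -/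
def coverEvent {d : ℕ} (f : Ed d → Ed d) (Crit : Set (Ed d)) (J : Set (Ed d))
    (N : ℕ) (ι : ℝ) (I : Set (Ed d)) : Set (ℕ → Ed d) :=
  {ω | ∃ i ≤ N, ∃ c : Ed d, ∃ r : ℝ, 0 < r ∧ Metric.ball c r ⊆ I ∧
    J ⊆ RComp f i ω '' Metric.ball c r ∧
    ∀ j ≤ i, ∀ x ∈ Metric.ball c r, ι < infDist (RComp f j ω x) Crit}

/-- `i` is a `(σ'², r)`-Young time for `(ω, x)`. -/
def IsYoungTime {d : ℕ} (f : Ed d → Ed d) (DfInv : Ed d → Ed d →L[ℝ] Ed d)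
    (Crit : Set (Ed d)) (σ' r b : ℝ) (N : ℕ) (J : Set (Ed d)) (ι δ1 : ℝ)
    (ω : ℕ → Ed d) (x : Ed d) (i : ℕ) : Prop :=
  IsSparseHypTime f DfInv Crit σ' r b N ω x i ∧
    shft^[i] ω ∈ coverEvent f Crit J N ι (Metric.ball (RComp f i ω x) δ1)

/-- `|Y_m(ω, x)|`: the number of Young times in `{1, …, m}`. -/
def youngCount {d : ℕ} (f : Ed d → Ed d) (DfInv : Ed d → Ed d →L[ℝ] Ed d)
    (Crit : Set (Ed d)) (σ' r b : ℝ) (N : ℕ) (J : Set (Ed d)) (ι δ1 : ℝ)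
    (ω : ℕ → Ed d) (x : Ed d) (m : ℕ) : ℕ :=
  {i : ℕ | 1 ≤ i ∧ i ≤ m ∧ IsYoungTime f DfInv Crit σ' r b N J ι δ1 ω x i}.ncard

/-- The transfer-type operator `P_θ` as a pointwise integral. -/
def transferFun {d : ℕ} (D : H1Data d) (σn θ : ℝ) (h : Ed d → ℝ) (x : Ed d) : ℝ :=
  ∫ w, Real.exp (θ * Real.log ‖D.DfInv (D.f x + w)‖) * h (D.f x + w) ∂(noiseMeasure d σn)

open Module
open scoped Topology

theorem cube_subset_iUnion_closedBall_grid (e : ℕ) {n : ℕ} (hn : 0 < n) :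
    univ.pi (fun _ : Fin e => Icc (0 : ℝ) 1) ⊆
      ⋃ j : Fin e → Fin (n + 1), closedBall (fun i => (j i : ℝ) / n) (1 / n) := by
  intro y hy
  have hn' : (0 : ℝ) < n := Nat.cast_pos.mpr hn
  have hy0 : ∀ i, 0 ≤ y i * n := fun i => mul_nonneg (hy i trivial).1 hn'.le
  refine mem_iUnion.mpr
    ⟨fun i => ⟨⌊y i * n⌋₊, Nat.lt_succ_of_le (Nat.floor_le_of_le ?_)⟩, ?_⟩
  · simpa using mul_le_of_le_one_left hn'.le (hy i trivial).2
  refine (dist_pi_le_iff (by positivity)).mpr fun i => ?_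
  have h1 := Nat.floor_le (hy0 i)
  have h2 := Nat.lt_floor_add_one (y i * n)
  have hsub : y i - ⌊y i * n⌋₊ / n = (y i * n - ⌊y i * n⌋₊) / n := by field_simp
  dsimp only
  rw [Real.dist_eq, hsub, abs_div, abs_of_pos hn', div_le_div_iff_of_pos_right hn', abs_le]
  constructor <;> linarith

theorem volume_thickening_lipschitz_image_cube_le {E : Type*} [NormedAddCommGroup E]
    [NormedSpace ℝ E] [FiniteDimensional ℝ E] [MeasurableSpace E] [BorelSpace E]
    (μ : Measure E) [μ.IsAddHaarMeasure] {e : ℕ} (hE : finrank ℝ E = e + 1) {L : ℝ≥0}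
    {g : (Fin e → ℝ) → E} (hg : LipschitzWith L g) :
    ∃ C : ℝ≥0, ∀ r ∈ Ioc (0 : ℝ) 1,
      μ (thickening r (g '' univ.pi fun _ => Icc 0 1)) ≤ C * ENNReal.ofReal r := by
  set a : ℝ := 3 ^ e * (1 + L) ^ (e + 1)
  refine ⟨(ENNReal.ofReal a * μ (ball 0 1)).toNNReal, fun r ⟨hr, hr1⟩ => ?_⟩
  set n := ⌈1 / r⌉₊
  have hn : 0 < n := Nat.ceil_pos.mpr (by positivity)
  have hn' : (0 : ℝ) < n := Nat.cast_pos.mpr hn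
  have hnr : 1 / (n : ℝ) ≤ r := by
    rw [div_le_iff₀ hn', ← div_le_iff₀' hr]; exact Nat.le_ceil _
  have hn1r : ((n : ℝ) + 1) * r ≤ 3 := by
    have hceil : (n : ℝ) < 1 / r + 1 := Nat.ceil_lt_add_one (one_div_pos.mpr hr).le
    calc ((n : ℝ) + 1) * r ≤ (1 / r + 2) * r :=
          mul_le_mul_of_nonneg_right (by linarith) hr.le
      _ = 1 + 2 * r := by field_simp
      _ ≤ 3 := by linarith
  set p : (Fin e → Fin (n + 1)) → E := fun j => g fun i => (j i : ℝ) / n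
  have hcover : thickening r (g '' univ.pi fun _ => Icc 0 1) ⊆
      ⋃ j, ball (p j) ((1 + L) * r) := by
    refine (thickening_subset_of_subset r ((image_mono
      (cube_subset_iUnion_closedBall_grid e hn)).trans (image_iUnion.trans_subset
      (iUnion_mono fun j => (hg.mapsTo_closedBall _ _).image_subset)))).trans ?_
    rw [thickening_iUnion]
    refine iUnion_mono fun j => ?_
    rw [thickening_closedBall hr (by positivity)]
    refine ball_subset_ball ?_
    calc r + L * (1 / n) ≤ r + L * r := by gcongr
      _ = (1 + L) * r := by ring
  calc μ (thickening r (g '' univ.pi fun _ => Icc 0 1))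
      ≤ ∑ j, μ (ball (p j) ((1 + L) * r)) := (measure_mono hcover).trans
        (measure_iUnion_fintype_le _ _)
    _ = ENNReal.ofReal (((n : ℝ) + 1) ^ e * ((1 + L) * r) ^ (e + 1)) * μ (ball 0 1) := by
        simp only [μ.addHaar_ball_of_pos _ (by positivity : 0 < (1 + (L : ℝ)) * r), hE,
          Finset.sum_const, Finset.card_univ, Fintype.card_fun, Fintype.card_fin, nsmul_eq_mul]
        rw [← mul_assoc, ← ENNReal.ofReal_natCast, ← ENNReal.ofReal_mul (by positivity)]
        push_cast; rfl
    _ ≤ ENNReal.ofReal (a * r) * μ (ball 0 1) := by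
        gcongr ENNReal.ofReal ?_ * _
        calc ((n : ℝ) + 1) ^ e * ((1 + L) * r) ^ (e + 1)
            = ((n + 1) * r) ^ e * ((1 + L) ^ (e + 1) * r) := by
              rw [mul_pow, mul_pow, pow_succ r]; ring
          _ ≤ 3 ^ e * ((1 + L) ^ (e + 1) * r) := by gcongr
          _ = a * r := by ring
    _ = _ := by
        rw [ENNReal.coe_toNNReal (ENNReal.mul_ne_top ENNReal.ofReal_ne_top
          measure_ball_lt_top.ne), ENNReal.ofReal_mul (by positivity)]
        ring

theorem lintegral_Ioi_min_exp_neg_le {δ : ℝ} (hδ : 0 < δ) (hδ1 : δ ≤ 1) :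
    ∫⁻ t in Ioi 0, ENNReal.ofReal (min δ (Real.exp (-t)))
      ≤ ENNReal.ofReal (δ * (Real.log (1 / δ) + 1)) := by
  have hexpT : Real.exp (-Real.log (1 / δ)) = δ := by
    rw [one_div, Real.log_inv, neg_neg, Real.exp_log hδ]
  set T := Real.log (1 / δ)
  have hT : 0 ≤ T := Real.log_nonneg (one_le_one_div hδ hδ1)
  calc ∫⁻ t in Ioi 0, ENNReal.ofReal (min δ (Real.exp (-t)))
      ≤ ∫⁻ t in Ioc 0 T ∪ Ioi T, ENNReal.ofReal (min δ (Real.exp (-t))) :=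
        lintegral_mono_set (Ioc_union_Ioi_eq_Ioi hT).ge
    _ ≤ (∫⁻ _ in Ioc 0 T, ENNReal.ofReal δ) + ∫⁻ t in Ioi T, ENNReal.ofReal (Real.exp (-t)) :=
        (lintegral_union_le _ _ _).trans (add_le_add
          (lintegral_mono fun _ => ENNReal.ofReal_le_ofReal (min_le_left _ _))
          (lintegral_mono fun _ => ENNReal.ofReal_le_ofReal (min_le_right _ _)))
    _ = ENNReal.ofReal (δ * (T + 1)) := by
        rw [setLIntegral_const, Real.volume_Ioc, sub_zero, ← ofReal_integral_eq_lintegral_ofReal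
          (integrableOn_exp_neg_Ioi T) (ae_of_all _ fun _ => (Real.exp_pos _).le),
          integral_exp_neg_Ioi, hexpT, ← ENNReal.ofReal_mul hδ.le,
          ← ENNReal.ofReal_add (by positivity) hδ.le]
        ring_nf

theorem setLIntegral_neg_log_le {α : Type*} [MeasurableSpace α] {μ : Measure α} {ρ : α → ℝ}
    (hρ : Measurable ρ) (hρ0 : ∀ x, 0 ≤ ρ x) {C : ℝ≥0∞} {δ : ℝ} (hδ : 0 < δ) (hδ1 : δ ≤ 1)
    (hC : ∀ r ∈ Ioc 0 δ, μ {x | ρ x < r} ≤ C * ENNReal.ofReal r) :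
    ∫⁻ x in {x | ρ x < δ}, ENNReal.ofReal (-Real.log (ρ x)) ∂μ
      ≤ C * ENNReal.ofReal (δ * (Real.log (1 / δ) + 1)) := by
  have hS : MeasurableSet {x | ρ x < δ} := measurableSet_lt hρ measurable_const
  have hnn : 0 ≤ᵐ[μ.restrict {x | ρ x < δ}] fun x => -Real.log (ρ x) :=
    (ae_restrict_iff' hS).mpr <| ae_of_all _ fun x hx =>
      neg_nonneg.mpr (Real.log_nonpos (hρ0 x) (hx.le.trans hδ1))
  have hlevel : ∀ t ∈ Ioi (0 : ℝ), μ.restrict {x | ρ x < δ} {x | t < -Real.log (ρ x)}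
      ≤ C * ENNReal.ofReal (min δ (Real.exp (-t))) := by
    intro t ht
    rw [Measure.restrict_apply' hS]
    refine ((measure_mono fun x hx => ?_).trans
      (hC _ ⟨lt_min hδ (Real.exp_pos _), min_le_left _ _⟩))
    obtain ⟨hxt, hxδ⟩ : t < -Real.log (ρ x) ∧ ρ x < δ := hx
    have hx0 : 0 < ρ x := (hρ0 x).lt_of_ne fun h => by
      rw [← h, Real.log_zero, neg_zero] at hxt; exact lt_irrefl _ (ht.trans hxt)
    exact lt_min hxδ ((Real.log_lt_iff_lt_exp hx0).mp (by linarith [hxt]))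
  calc ∫⁻ x in {x | ρ x < δ}, ENNReal.ofReal (-Real.log (ρ x)) ∂μ
      = ∫⁻ t in Ioi 0, μ.restrict {x | ρ x < δ} {x | t < -Real.log (ρ x)} :=
        lintegral_eq_lintegral_meas_lt _ hnn (hρ.log.neg).aemeasurable
    _ ≤ ∫⁻ t in Ioi 0, C * ENNReal.ofReal (min δ (Real.exp (-t))) :=
        setLIntegral_mono' measurableSet_Ioi hlevel
    _ ≤ C * ENNReal.ofReal (δ * (Real.log (1 / δ) + 1)) := by
        rw [lintegral_const_mul _ (by fun_prop)]
        gcongr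
        exact lintegral_Ioi_min_exp_neg_le hδ hδ1

namespace ContinuousLinearMap

variable {E F : Type*} [NormedAddCommGroup E] [NormedSpace ℝ E] [NormedAddCommGroup F]
  [NormedSpace ℝ F] {A : E →L[ℝ] F} {A' : F →L[ℝ] E}

theorem norm_rightInverse_le_inv (hAA' : A.comp A' = .id ℝ F) {m : ℝ} (hm : 0 < m)
    (hA : ∀ v, m * ‖v‖ ≤ ‖A v‖) : ‖A'‖ ≤ m⁻¹ :=
  opNorm_le_bound _ (inv_nonneg.mpr hm.le) fun w => by
    rw [inv_mul_eq_div, le_div_iff₀' hm]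
    calc m * ‖A' w‖ ≤ ‖A (A' w)‖ := hA _
      _ = ‖w‖ := by rw [← comp_apply, hAA', id_apply]

theorem one_le_norm_leftInverse_mul [Nontrivial E] (hA'A : A'.comp A = .id ℝ E) {M : ℝ}
    (hA : ∀ v, ‖A v‖ ≤ M * ‖v‖) : 1 ≤ ‖A'‖ * M := by
  obtain ⟨v, hv⟩ := exists_ne (0 : E)
  have hv' : 0 < ‖v‖ := norm_pos_iff.mpr hv
  refine le_of_mul_le_mul_right ?_ hv'
  calc 1 * ‖v‖ = ‖A' (A v)‖ := by rw [one_mul, ← comp_apply, hA'A, id_apply]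
    _ ≤ ‖A'‖ * ‖A v‖ := le_opNorm _ _
    _ ≤ ‖A'‖ * (M * ‖v‖) := by gcongr; exact hA v
    _ = ‖A'‖ * M * ‖v‖ := by ring

end ContinuousLinearMap

theorem nontrivial_Ed {d : ℕ} (hd : 0 < d) : Nontrivial (Ed d) :=
  have : Nonempty (Fin d) := ⟨⟨0, hd⟩⟩
  inferInstance

theorem Real.one_le_log_one_div {δ : ℝ} (hδ : 0 < δ) (hδe : δ ≤ Real.exp (-1)) :
    1 ≤ Real.log (1 / δ) := by
  rw [one_div, Real.log_inv, le_neg]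
  exact (Real.log_le_log hδ hδe).trans_eq (Real.log_exp _)

namespace H1Data

variable {d : ℕ} (D : H1Data d)

theorem infDist_crit_pos (hd : 0 < d) {x : Ed d} (hx : x ∈ D.X \ D.Crit) :
    0 < infDist x D.Crit := by
  have := nontrivial_Ed hd
  refine infDist_nonneg.lt_of_ne fun h => ?_
  have h1 := ContinuousLinearMap.one_le_norm_leftInverse_mul (D.inv_left x hx)
    fun v => (D.deriv_bound x hx v).2
  rw [← h, Real.zero_rpow (neg_ne_zero.mpr D.beta_pos.ne'), mul_zero, mul_zero] at h1
  exact one_pos.not_ge h1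

theorem abs_log_norm_DfInv_le (hd : 0 < d) {x : Ed d} (hx : x ∈ D.X \ D.Crit) :
    |Real.log ‖D.DfInv x‖| ≤ Real.log D.B + D.β * |Real.log (infDist x D.Crit)| := by
  have := nontrivial_Ed hd
  have hρ := D.infDist_crit_pos hd hx
  set ρ := infDist x D.Crit
  have hB : 0 < D.B := one_pos.trans D.one_lt_B
  have hupper : ‖D.DfInv x‖ ≤ D.B * ρ ^ (-D.β) := by
    have := ContinuousLinearMap.norm_rightInverse_le_inv (D.inv_right x hx) (by positivity)
      fun v => (D.deriv_bound x hx v).1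
    rwa [mul_inv, inv_inv, ← Real.rpow_neg hρ.le] at this
  have hlower : D.B⁻¹ * ρ ^ D.β ≤ ‖D.DfInv x‖ := by
    have := ContinuousLinearMap.one_le_norm_leftInverse_mul (D.inv_left x hx)
      fun v => (D.deriv_bound x hx v).2
    rwa [← inv_le_iff_one_le_mul₀ (by positivity), mul_inv, ← Real.rpow_neg hρ.le,
      neg_neg] at this
  have hpos : 0 < ‖D.DfInv x‖ := lt_of_lt_of_le (by positivity) hlower
  have hlog_upper := Real.log_le_log hpos hupper
  have hlog_lower := Real.log_le_log (by positivity) hlower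
  rw [Real.log_mul hB.ne' (by positivity), Real.log_rpow hρ] at hlog_upper
  rw [Real.log_mul (by positivity) (by positivity), Real.log_inv, Real.log_rpow hρ] at hlog_lower
  have hβ := D.beta_pos.le
  rw [abs_le]
  constructor <;> nlinarith [le_abs_self (Real.log ρ), neg_abs_le (Real.log ρ)]

theorem abs_log_norm_DfInv_le_neg_log (hd : 0 < d) {x : Ed d} (hx : x ∈ D.X \ D.Crit)
    (hx1 : infDist x D.Crit ≤ 1) :
    |Real.log ‖D.DfInv x‖| ≤ Real.log D.B + D.β * -Real.log (infDist x D.Crit) := by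
  have hbound := D.abs_log_norm_DfInv_le hd hx
  rwa [abs_of_nonpos (Real.log_nonpos infDist_nonneg hx1)] at hbound

theorem continuousOn_log_norm_DfInv (hd : 0 < d) :
    ContinuousOn (fun x => Real.log ‖D.DfInv x‖) (D.X \ D.Crit) := by
  intro x hx
  have hρ := D.infDist_crit_pos hd hx
  have hB : 0 < D.B := one_pos.trans D.one_lt_B
  rw [Metric.continuousWithinAt_iff]
  intro ε hε
  refine ⟨min (infDist x D.Crit / 2) (ε * infDist x D.Crit ^ D.β / (2 * D.B)), by positivity,
    fun y hy hyx => ?_⟩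
  rw [dist_comm] at hyx
  rw [Real.dist_eq, abs_sub_comm]
  calc |Real.log ‖D.DfInv x‖ - Real.log ‖D.DfInv y‖|
      ≤ D.B / infDist x D.Crit ^ D.β * dist x y :=
        D.logHolder_inv x hx y hy (hyx.le.trans (min_le_left _ _))
    _ ≤ D.B / infDist x D.Crit ^ D.β * (ε * infDist x D.Crit ^ D.β / (2 * D.B)) := by
        gcongr; exact hyx.le.trans (min_le_right _ _)
    _ = ε / 2 := by field_simp
    _ < ε := half_lt_self hε

theorem volume_thickening_crit_le (hd : 0 < d) :
    ∃ C : ℝ≥0, ∀ r ∈ Ioc (0 : ℝ) 1, volume (thickening r D.Crit) ≤ C * ENNReal.ofReal r := by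
  obtain ⟨m, g, L, -, hg, hsub⟩ := D.crit_structure
  have hE : finrank ℝ (Ed d) = d - 1 + 1 := by
    rw [finrank_euclideanSpace_fin]; omega
  choose C hC using fun i => volume_thickening_lipschitz_image_cube_le volume hE (hg i)
  refine ⟨∑ i, C i, fun r hr => ?_⟩
  calc volume (thickening r D.Crit)
      ≤ volume (⋃ i, thickening r (g i '' univ.pi fun _ => Icc 0 1)) := by
        rw [← thickening_iUnion]; exact measure_mono (thickening_subset_of_subset r hsub)
    _ ≤ ∑ i, volume (thickening r (g i '' univ.pi fun _ => Icc 0 1)) :=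
        measure_iUnion_fintype_le _ _
    _ ≤ ∑ i, C i * ENNReal.ofReal r := Finset.sum_le_sum fun i _ => hC i r hr
    _ = (∑ i, C i : ℝ≥0) * ENNReal.ofReal r := by
        rw [ENNReal.ofNNReal_finsetSum, Finset.sum_mul]

theorem volume_closure_crit (hd : 0 < d) : volume (closure D.Crit) = 0 := by
  obtain ⟨C, hC⟩ := D.volume_thickening_crit_le hd
  have hlim : Tendsto (fun r => (C : ℝ≥0∞) * ENNReal.ofReal r) (𝓝[>] 0) (𝓝 0) := by
    simpa [Function.comp_def] using (((ENNReal.continuous_const_mul ENNReal.coe_ne_top).comp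
      ENNReal.continuous_ofReal).tendsto 0).mono_left nhdsWithin_le_nhds
  refine le_antisymm (ge_of_tendsto hlim ?_) bot_le
  filter_upwards [Ioc_mem_nhdsGT one_pos] with r hr
  exact (measure_mono (closure_subset_thickening hr.1 _)).trans (hC r hr)

theorem aestronglyMeasurable_log_norm_DfInv (hd : 0 < d) :
    AEStronglyMeasurable (fun x => Real.log ‖D.DfInv x‖) (volume.restrict D.X) := by
  rw [Measure.restrict_congr_set
    (sdiff_null_ae_eq_self (s := D.X) (D.volume_closure_crit hd)).symm]
  exact ((D.continuousOn_log_norm_DfInv hd).mono (sdiff_subset_sdiff_right subset_closure))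
    |>.aestronglyMeasurable (D.compact_X.isClosed.measurableSet.diff
      isClosed_closure.measurableSet)

theorem lintegral_abs_log_norm_DfInv_thickening_le (hd : 0 < d) :
    ∃ K > 0, ∀ δ : ℝ, 0 < δ → δ ≤ Real.exp (-1) →
      ∫⁻ x in D.X ∩ thickening δ D.Crit, ENNReal.ofReal |Real.log ‖D.DfInv x‖|
        ≤ ENNReal.ofReal (K * δ * Real.log (1 / δ)) := by
  obtain ⟨C, hC⟩ := D.volume_thickening_crit_le hd
  have hlogB : 0 < Real.log D.B := Real.log_pos D.one_lt_B
  have hβ := D.beta_pos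
  refine ⟨(C + 1) * (Real.log D.B + 2 * D.β), by positivity, fun δ hδ hδe => ?_⟩
  rcases D.Crit.eq_empty_or_nonempty with hempty | hne
  · simp [hempty]
  have hL := Real.one_le_log_one_div hδ hδe
  have hδ1 : δ ≤ 1 := hδe.trans (Real.exp_le_one_iff.mpr (by norm_num))
  have hthick : ∀ r, thickening r D.Crit = {x | infDist x D.Crit < r} := fun r => by
    ext; exact mem_thickening_iff_infDist_lt hne
  have hS : MeasurableSet (D.X ∩ thickening δ D.Crit) :=
    D.compact_X.isClosed.measurableSet.inter isOpen_thickening.measurableSet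
  have hnotCrit : ∀ᵐ x ∂volume, x ∉ D.Crit :=
    measure_eq_zero_iff_ae_notMem.mp
      (measure_mono_null subset_closure (D.volume_closure_crit hd))
  have hpt : ∀ᵐ x ∂volume.restrict (D.X ∩ thickening δ D.Crit),
      ENNReal.ofReal |Real.log ‖D.DfInv x‖| ≤ ENNReal.ofReal (Real.log D.B)
        + ENNReal.ofReal D.β * ENNReal.ofReal (-Real.log (infDist x D.Crit)) := by
    filter_upwards [ae_restrict_mem hS, ae_restrict_of_ae hnotCrit] with x ⟨hxX, hxδ⟩ hxC
    rw [hthick] at hxδ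
    rw [← ENNReal.ofReal_mul hβ.le]
    exact (ENNReal.ofReal_le_ofReal (D.abs_log_norm_DfInv_le_neg_log hd ⟨hxX, hxC⟩
      (hxδ.le.trans hδ1))).trans ENNReal.ofReal_add_le
  calc ∫⁻ x in D.X ∩ thickening δ D.Crit, ENNReal.ofReal |Real.log ‖D.DfInv x‖|
      ≤ ∫⁻ x in thickening δ D.Crit, ENNReal.ofReal (Real.log D.B)
          + ENNReal.ofReal D.β * ENNReal.ofReal (-Real.log (infDist x D.Crit)) :=
        (lintegral_mono_ae hpt).trans (lintegral_mono_set inter_subset_right)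
    _ = ENNReal.ofReal (Real.log D.B) * volume (thickening δ D.Crit) + ENNReal.ofReal D.β *
          ∫⁻ x in {x | infDist x D.Crit < δ}, ENNReal.ofReal (-Real.log (infDist x D.Crit)) := by
        rw [lintegral_add_left measurable_const, setLIntegral_const,
          lintegral_const_mul' _ _ ENNReal.ofReal_ne_top, hthick, mul_comm]
    _ ≤ ENNReal.ofReal (Real.log D.B) * (C * ENNReal.ofReal δ) + ENNReal.ofReal D.β *
          (C * ENNReal.ofReal (δ * (Real.log (1 / δ) + 1))) := by
        gcongr
        · exact hC δ ⟨hδ, hδ1⟩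
        · exact setLIntegral_neg_log_le (continuous_infDist_pt _).measurable
            (fun _ => infDist_nonneg) hδ hδ1
            fun r hr => hthick r ▸ hC r ⟨hr.1, hr.2.trans hδ1⟩
    _ ≤ ENNReal.ofReal ((C + 1) * (Real.log D.B + 2 * D.β) * δ * Real.log (1 / δ)) := by
        rw [← ENNReal.ofReal_coe_nnreal, ← ENNReal.ofReal_mul (by positivity),
          ← ENNReal.ofReal_mul (by positivity), ← ENNReal.ofReal_mul (by positivity),
          ← ENNReal.ofReal_mul (by positivity),
          ← ENNReal.ofReal_add (by positivity) (by positivity)]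
        refine ENNReal.ofReal_le_ofReal ?_
        have hCδ : 0 ≤ (C : ℝ) * δ := mul_nonneg C.coe_nonneg hδ.le
        nlinarith [mul_nonneg (mul_nonneg hCδ hlogB.le) (sub_nonneg.mpr hL),
          mul_nonneg (mul_nonneg hCδ hβ.le) (sub_nonneg.mpr hL),
          mul_nonneg (mul_nonneg (by positivity : 0 ≤ Real.log D.B + 2 * D.β) hδ.le)
            (zero_le_one.trans hL)]

theorem integrableOn_log_norm_DfInv (hd : 0 < d) :
    IntegrableOn (fun x => Real.log ‖D.DfInv x‖) D.X := by
  obtain ⟨K, -, hK⟩ := D.lintegral_abs_log_norm_DfInv_thickening_le hd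
  set δ := Real.exp (-1)
  have hδ : 0 < δ := Real.exp_pos _
  rw [← inter_union_sdiff D.X (thickening δ D.Crit)]
  refine IntegrableOn.union ⟨(D.aestronglyMeasurable_log_norm_DfInv hd).mono_set
    inter_subset_left, (hasFiniteIntegral_iff_norm _).mpr ((hK δ hδ le_rfl).trans_lt
    ENNReal.ofReal_lt_top)⟩ ?_
  refine ((D.continuousOn_log_norm_DfInv hd).mono ?_).integrableOn_compact
    (D.compact_X.diff isOpen_thickening)
  exact sdiff_subset_sdiff_right (self_subset_thickening hδ _)

end H1Data

/-- Under (H1), `log ‖df⁻¹‖` is Lebesgue-integrable near the critical set: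
`∫_{B_δ(𝒞)} |log ‖df⁻¹‖| dx ≲ δ log(1/δ)`, and `log ‖df⁻¹‖ ∈ L¹(μ')` for any
measure `μ'` with bounded density with respect to Lebesgue measure on `X`. -/
theorem log_deriv_inv_integrable {d : ℕ} (hd : 0 < d) (D : H1Data d) :
    (∃ K > 0, ∃ δ0 > 0, ∀ δ : ℝ, 0 < δ → δ ≤ δ0 →
      (∫ x in D.X ∩ Metric.thickening δ D.Crit, |Real.log ‖D.DfInv x‖|)
        ≤ K * δ * Real.log (1 / δ)) ∧
    ∀ (μ' : Measure (Ed d)) (K' : ℝ≥0),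
      μ' ≤ (K' : ℝ≥0∞) • volume.restrict D.X →
      Integrable (fun x => Real.log ‖D.DfInv x‖) μ' := by
  obtain ⟨K, hK, hbound⟩ := D.lintegral_abs_log_norm_DfInv_thickening_le hd
  refine ⟨⟨K, hK, Real.exp (-1), Real.exp_pos _, fun δ hδ hδe => ?_⟩, fun μ' K' hle => ?_⟩
  · rw [integral_eq_lintegral_of_nonneg_ae (ae_of_all _ fun _ => abs_nonneg _)
      ((D.aestronglyMeasurable_log_norm_DfInv hd).norm.mono_set inter_subset_left)]
    exact ENNReal.toReal_le_of_le_ofReal (mul_nonneg (by positivity)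
      (zero_le_one.trans (Real.one_le_log_one_div hδ hδe))) (hbound δ hδ hδe)
  · exact ((D.integrableOn_log_norm_DfInv hd).smul_measure ENNReal.coe_ne_top).mono_measure
      hle
end
end

section
/- Under Hypothesis (H1), let g(x) = log‖df(x)^{−1}‖. Then for every θ with 0 < θ < 1/β there exists a constant K > 0 such that for all sufficiently small δ > 0, ∫_{B_δ(C)} e^{θ g(x)} dx ≤ K δ^{1 − βθ}; moreover g is uniformly bounded on X \ B_δ(C) for each δ > 0. -/
open MeasureTheory Metric Set Filter
open scoped ENNReal NNReal symmDiff

noncomputable section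

/-!
Write `ρ(x) = dist(x, 𝒞)`. Off `𝒞`, inverting the two-sided bound `B⁻¹ ρ^β ≤ ‖df v‖/‖v‖ ≤ B ρ^{-β}`
gives `(B ρ^{-β})⁻¹ ≤ ‖df⁻¹‖ ≤ B ρ^{-β}`. Outside `B_δ(𝒞)` this bounds `|log ‖df⁻¹‖|` by
`log (B δ^{-β})`; inside, it gives `e^{θ g} ≤ B^θ ρ^{-βθ}`.

Since `𝒞` is covered by finitely many Lipschitz images of the unit `(n-1)`-cube, a grid of mesh
`t` covers `B_t(𝒞)` by `O(t^{1-n})` balls of radius `O(t)`, so `vol B_t(𝒞) ≤ c t`. In particular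
`𝒞` is null, and on the dyadic shell `{s ≤ ρ < 2s} ⊆ B_{2s}(𝒞)` the integral of `ρ^{-βθ}` is at
most `2c s^{1-βθ}`. Summing over `s = δ 2^{-j-1}` gives a geometric series, convergent because
`βθ < 1`, of size `O(δ^{1-βθ})`.
-/

open Topology

theorem exists_dist_grid_le {k n : ℕ} (hn : 0 < n) {q : Fin k → ℝ}
    (hq : q ∈ univ.pi fun _ => Icc (0 : ℝ) 1) :
    ∃ p : Fin k → Fin (n + 1), dist q (fun a => (p a : ℝ) / n) ≤ 1 / n := by
  have hn' : (0 : ℝ) < n := Nat.cast_pos.mpr hn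
  have hq' : ∀ a, 0 ≤ q a * n ∧ q a * n ≤ n := fun a =>
    ⟨by nlinarith [(hq a trivial).1], by nlinarith [(hq a trivial).2]⟩
  refine ⟨fun a => ⟨⌊q a * n⌋₊, Nat.lt_succ_of_le (Nat.floor_le_of_le (hq' a).2)⟩,
    (dist_pi_le_iff (by positivity)).mpr fun a => ?_⟩
  have hfl := Nat.floor_le (hq' a).1
  have hlt := Nat.lt_floor_add_one (q a * n)
  have hsub : q a - (⌊q a * n⌋₊ : ℝ) / n = (q a * n - ⌊q a * n⌋₊) / n := by field_simp
  rw [Real.dist_eq, hsub, abs_div, abs_of_pos hn', abs_of_nonneg (by linarith)]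
  exact div_le_div_of_nonneg_right (by linarith) hn'.le

theorem thickening_image_cube_subset_iUnion_closedBall {X : Type*} [PseudoMetricSpace X]
    {k n : ℕ} (hn : 0 < n) {L : ℝ≥0} {g : (Fin k → ℝ) → X} (hg : LipschitzWith L g)
    {t : ℝ} (ht : 1 / (n : ℝ) ≤ t) :
    thickening t (g '' univ.pi fun _ => Icc (0 : ℝ) 1) ⊆
      ⋃ p : Fin k → Fin (n + 1), closedBall (g fun a => (p a : ℝ) / n) ((L + 1) * t) := by
  intro x hx
  obtain ⟨_, ⟨q, hq, rfl⟩, hxq⟩ := mem_thickening_iff.mp hx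
  obtain ⟨p, hqp⟩ := exists_dist_grid_le hn hq
  refine mem_iUnion.mpr ⟨p, mem_closedBall.mpr ?_⟩
  calc dist x (g fun a => (p a : ℝ) / n)
      ≤ dist x (g q) + L * dist q (fun a => (p a : ℝ) / n) :=
        (dist_triangle _ _ _).trans (add_le_add_right (hg.dist_le_mul _ _) _)
    _ ≤ t + L * t := add_le_add hxq.le (mul_le_mul_of_nonneg_left (hqp.trans ht) L.2)
    _ = (L + 1) * t := by ring

section AddHaar

variable {E : Type*} [NormedAddCommGroup E] [MeasurableSpace E] [BorelSpace E] (μ : Measure E)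
  [μ.IsAddHaarMeasure] {k m : ℕ} {L : ℝ≥0} {g : Fin m → (Fin k → ℝ) → E} {C : Set E}

theorem measure_thickening_le_of_subset_lipschitz_images (hg : ∀ i, LipschitzWith L (g i))
    (hC : C ⊆ ⋃ i, g i '' univ.pi fun _ => Icc (0 : ℝ) 1) {n : ℕ} (hn : 0 < n) {t : ℝ}
    (hnt : 1 / (n : ℝ) ≤ t) :
    μ (thickening t C) ≤ (m * (n + 1) ^ k : ℕ) * μ (closedBall 0 ((L + 1) * t)) := by
  have hcover : thickening t C ⊆
      ⋃ i, ⋃ p : Fin k → Fin (n + 1), closedBall (g i fun a => (p a : ℝ) / n) ((L + 1) * t) := by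
    refine (thickening_subset_of_subset t hC).trans ?_
    rw [thickening_iUnion]
    exact iUnion_mono fun i => thickening_image_cube_subset_iUnion_closedBall hn (hg i) hnt
  refine (measure_mono hcover).trans <| (measure_iUnion_fintype_le _ _).trans <|
    (Finset.sum_le_sum fun i _ => measure_iUnion_fintype_le _ _).trans_eq ?_
  simp only [Measure.addHaar_closedBall_center μ, Finset.sum_const, Finset.card_univ,
    Fintype.card_fun, Fintype.card_fin, nsmul_eq_mul, Nat.cast_mul, Nat.cast_pow, mul_assoc]

theorem exists_measure_thickening_le_of_subset_lipschitz_images [NormedSpace ℝ E]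
    [FiniteDimensional ℝ E] (hk : Module.finrank ℝ E = k + 1) (hg : ∀ i, LipschitzWith L (g i))
    (hC : C ⊆ ⋃ i, g i '' univ.pi fun _ => Icc (0 : ℝ) 1) :
    ∃ c > 0, ∀ t : ℝ, 0 < t → t ≤ 1 → μ (thickening t C) ≤ ENNReal.ofReal (c * t) := by
  set V := (μ (ball 0 1)).toReal
  refine ⟨m * 3 ^ k * (L + 1) ^ (k + 1) * V + 1, by positivity, fun t ht ht1 => ?_⟩
  set n := ⌈1 / t⌉₊
  have hnt : 1 / (n : ℝ) ≤ t := (one_div_le (by positivity) ht).mpr (Nat.le_ceil _)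
  have hnt3 : (n + 1 : ℝ) * t ≤ 3 := by
    have hn1 : (n : ℝ) < 1 / t + 1 := Nat.ceil_lt_add_one (one_div_pos.mpr ht).le
    calc (n + 1 : ℝ) * t ≤ (1 / t + 2) * t := mul_le_mul_of_nonneg_right (by linarith) ht.le
      _ = 1 + 2 * t := by field_simp
      _ ≤ 3 := by linarith
  have hr : 0 ≤ ((L : ℝ) + 1) * t := by positivity
  calc μ (thickening t C)
      ≤ (m * (n + 1) ^ k : ℕ) * μ (closedBall 0 ((L + 1) * t)) :=
        measure_thickening_le_of_subset_lipschitz_images μ hg hC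
          (Nat.ceil_pos.mpr (by positivity)) hnt
    _ = ENNReal.ofReal (m * (n + 1) ^ k * (((L + 1) * t) ^ (k + 1) * V)) := by
        rw [Measure.addHaar_closedBall μ _ hr, hk, ← ENNReal.ofReal_toReal measure_ball_lt_top.ne,
          ← ENNReal.ofReal_mul (by positivity), ← ENNReal.ofReal_natCast,
          ← ENNReal.ofReal_mul (by positivity)]
        push_cast
        rfl
    _ ≤ ENNReal.ofReal ((m * 3 ^ k * (L + 1) ^ (k + 1) * V + 1) * t) := by
      refine ENNReal.ofReal_le_ofReal ?_
      calc (m : ℝ) * (n + 1) ^ k * (((L + 1) * t) ^ (k + 1) * V)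
          = m * ((n + 1) * t) ^ k * (L + 1) ^ (k + 1) * V * t := by
            rw [mul_pow, mul_pow, pow_succ t]; ring
        _ ≤ m * 3 ^ k * (L + 1) ^ (k + 1) * V * t := by gcongr
        _ ≤ _ := by nlinarith

end AddHaar

section Thickening

variable {X : Type*} [PseudoMetricSpace X] {C : Set X}

def distShell (C : Set X) (s : ℝ) : Set X := {x | s ≤ infDist x C ∧ infDist x C < 2 * s}

theorem distShell_subset_thickening {s : ℝ} (hs : 0 < s) :
    distShell C s ⊆ thickening (2 * s) C := by
  intro x hx
  rcases C.eq_empty_or_nonempty with rfl | hne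
  · simpa using hs.trans_le hx.1
  · exact (mem_thickening_iff_infDist_lt hne).mpr hx.2

theorem thickening_subset_closure_union_iUnion_distShell {δ : ℝ} (hδ : 0 < δ) :
    thickening δ C ⊆ closure C ∪ ⋃ j : ℕ, distShell C (δ * (1 / 2) ^ (j + 1)) := by
  intro x hx
  obtain ⟨z, hz, -⟩ := mem_thickening_iff.mp hx
  have hxδ : infDist x C < δ := (mem_thickening_iff_infDist_lt ⟨z, hz⟩).mp hx
  rcases (infDist_nonneg : 0 ≤ infDist x C).eq_or_lt with hx0 | hx0
  · exact Or.inl ((mem_closure_iff_infDist_zero ⟨z, hz⟩).mpr hx0.symm)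
  have hex : ∃ j, δ * (1 / 2) ^ j ≤ infDist x C := by
    obtain ⟨j, hj⟩ := exists_pow_lt_of_lt_one (div_pos hx0 hδ) one_half_lt_one
    exact ⟨j, ((lt_div_iff₀' hδ).mp hj).le⟩
  obtain ⟨j, hj⟩ : ∃ j, Nat.find hex = j + 1 :=
    Nat.exists_eq_add_one.mpr <| Nat.pos_of_ne_zero fun h0 => by
      have := Nat.find_spec hex
      rw [h0, pow_zero, mul_one] at this
      linarith
  refine Or.inr (mem_iUnion.mpr ⟨j, hj ▸ Nat.find_spec hex, ?_⟩)
  have := not_le.mp (Nat.find_min hex (by omega : j < Nat.find hex))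
  rw [pow_succ]
  linarith

variable [MeasurableSpace X] {μ : Measure X} {c : ℝ}

theorem measure_closure_eq_zero_of_measure_thickening_le
    (hC : ∀ t : ℝ, 0 < t → t ≤ 1 → μ (thickening t C) ≤ ENNReal.ofReal (c * t)) :
    μ (closure C) = 0 := by
  have hlim : Tendsto (fun t => ENNReal.ofReal (c * t)) (𝓝[>] 0) (𝓝 0) := by
    simpa using (ENNReal.tendsto_ofReal ((continuous_const_mul c).tendsto 0)).mono_left
      nhdsWithin_le_nhds
  refine le_antisymm (ge_of_tendsto hlim ?_) zero_le
  filter_upwards [Ioc_mem_nhdsGT zero_lt_one] with t ht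
  exact (measure_mono (closure_subset_thickening ht.1 C)).trans (hC t ht.1 ht.2)

theorem setLIntegral_distShell_infDist_rpow_neg_le {γ : ℝ} (hγ0 : 0 ≤ γ)
    (hC : ∀ t : ℝ, 0 < t → t ≤ 1 → μ (thickening t C) ≤ ENNReal.ofReal (c * t)) {s : ℝ}
    (hs : 0 < s) (hs1 : 2 * s ≤ 1) :
    ∫⁻ x in distShell C s, ENNReal.ofReal (infDist x C ^ (-γ)) ∂μ ≤
      ENNReal.ofReal (2 * c * s ^ (1 - γ)) := by
  calc ∫⁻ x in distShell C s, ENNReal.ofReal (infDist x C ^ (-γ)) ∂μ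
      ≤ ∫⁻ _ in distShell C s, ENNReal.ofReal (s ^ (-γ)) ∂μ :=
        setLIntegral_mono measurable_const fun x hx => ENNReal.ofReal_le_ofReal <|
          Real.rpow_le_rpow_of_nonpos hs hx.1 (neg_nonpos.mpr hγ0)
    _ ≤ ENNReal.ofReal (s ^ (-γ)) * ENNReal.ofReal (c * (2 * s)) := by
        rw [setLIntegral_const]
        gcongr
        exact (measure_mono (distShell_subset_thickening hs)).trans (hC _ (by positivity) hs1)
    _ = ENNReal.ofReal (2 * c * s ^ (1 - γ)) := by
        rw [← ENNReal.ofReal_mul (by positivity), sub_eq_neg_add, Real.rpow_add_one hs.ne']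
        ring_nf

theorem exists_lintegral_thickening_infDist_rpow_neg_le (hc : 0 < c) {γ : ℝ} (hγ0 : 0 ≤ γ)
    (hγ1 : γ < 1)
    (hC : ∀ t : ℝ, 0 < t → t ≤ 1 → μ (thickening t C) ≤ ENNReal.ofReal (c * t)) :
    ∃ K > 0, ∀ δ : ℝ, 0 < δ → δ ≤ 1 →
      ∫⁻ x in thickening δ C, ENNReal.ofReal (infDist x C ^ (-γ)) ∂μ ≤
        ENNReal.ofReal (K * δ ^ (1 - γ)) := by
  set r : ℝ := (1 / 2) ^ (1 - γ) with hr
  have hr0 : 0 < r := by positivity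
  have hr1 : r < 1 := Real.rpow_lt_one (by norm_num) (by norm_num) (by linarith)
  refine ⟨2 * c * r / (1 - r), div_pos (by positivity) (sub_pos.mpr hr1), fun δ hδ hδ1 => ?_⟩
  have hshell : ∀ j : ℕ, ∫⁻ x in distShell C (δ * (1 / 2) ^ (j + 1)),
      ENNReal.ofReal (infDist x C ^ (-γ)) ∂μ ≤
        ENNReal.ofReal (2 * c * δ ^ (1 - γ) * r * r ^ j) := by
    intro j
    have h2s : 2 * (δ * (1 / 2) ^ (j + 1)) ≤ 1 := by
      rw [pow_succ]
      nlinarith [pow_le_one₀ (by norm_num : (0 : ℝ) ≤ 1 / 2) (by norm_num) (n := j)]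
    refine (setLIntegral_distShell_infDist_rpow_neg_le hγ0 hC (by positivity) h2s).trans_eq ?_
    rw [Real.mul_rpow hδ.le (by positivity), ← Real.rpow_pow_comm (by norm_num), ← hr, pow_succ]
    ring_nf
  have hgeom : ∑' j, ENNReal.ofReal (2 * c * δ ^ (1 - γ) * r * r ^ j) =
      ENNReal.ofReal (2 * c * r / (1 - r) * δ ^ (1 - γ)) := by
    rw [← ENNReal.ofReal_tsum_of_nonneg (fun j => by positivity)
      ((summable_geometric_of_lt_one hr0.le hr1).mul_left _), tsum_mul_left,
      tsum_geometric_of_lt_one hr0.le hr1]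
    ring_nf
  calc ∫⁻ x in thickening δ C, ENNReal.ofReal (infDist x C ^ (-γ)) ∂μ
      ≤ ∫⁻ x in closure C ∪ ⋃ j : ℕ, distShell C (δ * (1 / 2) ^ (j + 1)),
          ENNReal.ofReal (infDist x C ^ (-γ)) ∂μ :=
        lintegral_mono_set (thickening_subset_closure_union_iUnion_distShell hδ)
    _ ≤ ∑' j : ℕ, ∫⁻ x in distShell C (δ * (1 / 2) ^ (j + 1)),
          ENNReal.ofReal (infDist x C ^ (-γ)) ∂μ := by
        refine (lintegral_union_le _ _ _).trans ?_
        rw [setLIntegral_measure_zero _ _ (measure_closure_eq_zero_of_measure_thickening_le hC),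
          zero_add]
        exact lintegral_iUnion_le _ _
    _ ≤ _ := (ENNReal.tsum_le_tsum hshell).trans hgeom.le

end Thickening

section InverseBounds

variable {𝕜 E F : Type*} [NontriviallyNormedField 𝕜] [NormedAddCommGroup E] [NormedSpace 𝕜 E]
  [NormedAddCommGroup F] [NormedSpace 𝕜 F] {A : E →L[𝕜] F} {A' : F →L[𝕜] E}

theorem ContinuousLinearMap.opNorm_le_inv_of_comp_eq_id (h : A.comp A' = .id 𝕜 F) {a : ℝ}
    (ha : 0 < a) (hA : ∀ v, a * ‖v‖ ≤ ‖A v‖) : ‖A'‖ ≤ a⁻¹ :=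
  A'.opNorm_le_bound (inv_nonneg.mpr ha.le) fun w => (le_inv_mul_iff₀ ha).mpr <| by
    simpa [← ContinuousLinearMap.comp_apply, h] using hA (A' w)

theorem ContinuousLinearMap.inv_le_opNorm_of_comp_eq_id [Nontrivial E] (h : A'.comp A = .id 𝕜 E)
    {b : ℝ} (hb : 0 < b) (hA : ∀ v, ‖A v‖ ≤ b * ‖v‖) : b⁻¹ ≤ ‖A'‖ := by
  obtain ⟨v, hv⟩ := exists_ne (0 : E)
  have hv' : 0 < ‖v‖ := norm_pos_iff.mpr hv
  rw [inv_le_iff_one_le_mul₀ hb]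
  refine le_of_mul_le_mul_right ?_ hv'
  calc 1 * ‖v‖ = ‖A' (A v)‖ := by simp [← ContinuousLinearMap.comp_apply, h]
    _ ≤ ‖A'‖ * (b * ‖v‖) := A'.le_opNorm_of_le (hA v)
    _ = ‖A'‖ * b * ‖v‖ := by ring

end InverseBounds

theorem abs_log_le_log_of_inv_le_of_le {a u : ℝ} (hu : 0 < u) (h₁ : u⁻¹ ≤ a) (h₂ : a ≤ u) :
    |Real.log a| ≤ Real.log u := by
  have hlow := Real.log_le_log (inv_pos.mpr hu) h₁
  rw [Real.log_inv] at hlow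
  exact abs_le.mpr ⟨by linarith, Real.log_le_log ((inv_pos.mpr hu).trans_le h₁) h₂⟩

namespace H1Data

variable {d : ℕ} (D : H1Data d) {x : Ed d}

theorem B_pos : 0 < D.B := one_pos.trans D.one_lt_B

theorem exists_volume_thickening_crit_le (hd : 0 < d) :
    ∃ c > 0, ∀ t : ℝ, 0 < t → t ≤ 1 →
      volume (thickening t D.Crit) ≤ ENNReal.ofReal (c * t) := by
  obtain ⟨m, g, L, -, hg, hC⟩ := D.crit_structure
  exact exists_measure_thickening_le_of_subset_lipschitz_images volume
    (by rw [finrank_euclideanSpace_fin]; omega) hg hC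

theorem infDist_pos (hd : 0 < d) (hx : x ∈ D.X \ D.Crit) : 0 < infDist x D.Crit := by
  refine infDist_nonneg.lt_of_ne fun h0 => ?_
  -- at `infDist = 0` the upper bound of `deriv_bound` reads `‖Df x v‖ ≤ 0`, as `0 ^ (-β) = 0`
  have hDf : D.Df x = 0 := ContinuousLinearMap.ext fun v => norm_le_zero_iff.mp <| by
    simpa [← h0, Real.zero_rpow (neg_ne_zero.mpr D.beta_pos.ne')] using (D.deriv_bound x hx v).2
  have := NeZero.of_pos hd
  obtain ⟨v, hv⟩ := exists_ne (0 : Ed d)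
  have hv0 : 0 = v := by simpa [hDf] using congr($(D.inv_left x hx) v)
  exact hv hv0.symm

theorem norm_dfInv_le (hd : 0 < d) (hx : x ∈ D.X \ D.Crit) :
    ‖D.DfInv x‖ ≤ D.B * infDist x D.Crit ^ (-D.β) := by
  have hρ := D.infDist_pos hd hx
  have := (D.Df x).opNorm_le_inv_of_comp_eq_id (D.inv_right x hx)
    (by have := D.B_pos; positivity) fun v => (D.deriv_bound x hx v).1
  rwa [mul_inv, inv_inv, ← Real.rpow_neg hρ.le] at this

theorem inv_le_norm_dfInv (hd : 0 < d) (hx : x ∈ D.X \ D.Crit) :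
    (D.B * infDist x D.Crit ^ (-D.β))⁻¹ ≤ ‖D.DfInv x‖ := by
  have := NeZero.of_pos hd
  have hρ := D.infDist_pos hd hx
  exact ContinuousLinearMap.inv_le_opNorm_of_comp_eq_id (D.inv_left x hx)
    (by have := D.B_pos; positivity) fun v => (D.deriv_bound x hx v).2

theorem exp_mul_log_norm_dfInv_le (hd : 0 < d) {θ : ℝ} (hθ : 0 ≤ θ) (hx : x ∈ D.X \ D.Crit) :
    Real.exp (θ * Real.log ‖D.DfInv x‖) ≤ D.B ^ θ * infDist x D.Crit ^ (-(D.β * θ)) := by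
  have hρ := D.infDist_pos hd hx
  have hnorm : 0 < ‖D.DfInv x‖ :=
    (inv_pos.mpr (by have := D.B_pos; positivity)).trans_le (D.inv_le_norm_dfInv hd hx)
  rw [mul_comm, ← Real.rpow_def_of_pos hnorm, neg_mul_eq_neg_mul, Real.rpow_mul hρ.le,
    ← Real.mul_rpow D.B_pos.le (by positivity)]
  exact Real.rpow_le_rpow hnorm.le (D.norm_dfInv_le hd hx) hθ

theorem abs_log_norm_dfInv_le (hd : 0 < d) {δ : ℝ} (hδ : 0 < δ)
    (hx : x ∈ D.X \ thickening δ D.Crit) :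
    |Real.log ‖D.DfInv x‖| ≤ Real.log (D.B * δ ^ (-D.β)) := by
  have hx' : x ∈ D.X \ D.Crit := ⟨hx.1, fun h => hx.2 (self_subset_thickening hδ _ h)⟩
  have hρ := D.infDist_pos hd hx'
  have hne : D.Crit.Nonempty := nonempty_iff_ne_empty.mpr fun h => by simp [h] at hρ
  have hδρ : δ ≤ infDist x D.Crit := not_lt.mp fun h =>
    hx.2 ((mem_thickening_iff_infDist_lt hne).mpr h)
  have hmono : D.B * infDist x D.Crit ^ (-D.β) ≤ D.B * δ ^ (-D.β) :=
    mul_le_mul_of_nonneg_left (Real.rpow_le_rpow_of_nonpos hδ hδρ (neg_nonpos.mpr D.beta_pos.le))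
      D.B_pos.le
  have := D.B_pos
  exact abs_log_le_log_of_inv_le_of_le (by positivity)
    ((inv_anti₀ (by positivity) hmono).trans (D.inv_le_norm_dfInv hd hx'))
    ((D.norm_dfInv_le hd hx').trans hmono)

theorem volume_crit_eq_zero (hd : 0 < d) : volume D.Crit = 0 := by
  obtain ⟨c, -, hc⟩ := D.exists_volume_thickening_crit_le hd
  exact measure_mono_null subset_closure (measure_closure_eq_zero_of_measure_thickening_le hc)

theorem setLIntegral_exp_mul_log_norm_dfInv_le (hd : 0 < d) {θ : ℝ} (hθ : 0 ≤ θ) (δ : ℝ) :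
    ∫⁻ x in D.X ∩ thickening δ D.Crit, ENNReal.ofReal (Real.exp (θ * Real.log ‖D.DfInv x‖)) ≤
      ENNReal.ofReal (D.B ^ θ) *
        ∫⁻ x in thickening δ D.Crit, ENNReal.ofReal (infDist x D.Crit ^ (-(D.β * θ))) := by
  have hS : MeasurableSet (D.X ∩ thickening δ D.Crit) :=
    D.compact_X.isClosed.measurableSet.inter isOpen_thickening.measurableSet
  rw [← lintegral_const_mul' _ _ ENNReal.ofReal_ne_top]
  refine (lintegral_mono_ae ?_).trans (lintegral_mono_set inter_subset_right)
  filter_upwards [ae_restrict_mem hS,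
    ae_restrict_of_ae (measure_eq_zero_iff_ae_notMem.mp (D.volume_crit_eq_zero hd))] with x hxS hxC
  rw [← ENNReal.ofReal_mul (Real.rpow_nonneg D.B_pos.le θ)]
  exact ENNReal.ofReal_le_ofReal (D.exp_mul_log_norm_dfInv_le hd hθ ⟨hxS.1, hxC⟩)

end H1Data

/-- Under (H1), with `g = log ‖df⁻¹‖`: for `0 < θ < 1/β`,
`∫_{B_δ(𝒞)} e^{θ g} dx ≲ δ^{1 - βθ}`, and `g` is uniformly bounded away from the
critical set. -/
theorem exp_log_deriv_inv_integrable {d : ℕ} (hd : 0 < d) (D : H1Data d)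
    (θ : ℝ) (hθ : 0 < θ) (hθβ : θ < 1 / D.β) :
    (∃ K > 0, ∃ δ0 > 0, ∀ δ : ℝ, 0 < δ → δ ≤ δ0 →
      (∫ x in D.X ∩ Metric.thickening δ D.Crit,
          Real.exp (θ * Real.log ‖D.DfInv x‖))
        ≤ K * δ ^ (1 - D.β * θ)) ∧
    ∀ δ : ℝ, 0 < δ → ∃ M : ℝ, ∀ x ∈ D.X \ Metric.thickening δ D.Crit,
      |Real.log ‖D.DfInv x‖| ≤ M := by
  refine ⟨?_, fun δ hδ => ⟨_, fun x hx => D.abs_log_norm_dfInv_le hd hδ hx⟩⟩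
  have hB := D.B_pos
  have hβ := D.beta_pos
  have hβθ : D.β * θ < 1 := by rwa [lt_div_iff₀ hβ, mul_comm] at hθβ
  obtain ⟨c, hc, hthick⟩ := D.exists_volume_thickening_crit_le hd
  obtain ⟨K, hK, hint⟩ :=
    exists_lintegral_thickening_infDist_rpow_neg_le hc (by positivity : 0 ≤ D.β * θ) hβθ hthick
  refine ⟨D.B ^ θ * K, by positivity, 1, one_pos, fun δ hδ hδ1 => ?_⟩
  have hlin : ∫⁻ x in D.X ∩ thickening δ D.Crit,
      ENNReal.ofReal ‖Real.exp (θ * Real.log ‖D.DfInv x‖)‖ ≤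
        ENNReal.ofReal (D.B ^ θ * K * δ ^ (1 - D.β * θ)) := by
    simp only [Real.norm_eq_abs, Real.abs_exp]
    calc _ ≤ _ := D.setLIntegral_exp_mul_log_norm_dfInv_le hd hθ.le δ
      _ ≤ ENNReal.ofReal (D.B ^ θ) * ENNReal.ofReal (K * δ ^ (1 - D.β * θ)) := by
        gcongr; exact hint δ hδ hδ1
      _ = _ := by rw [← ENNReal.ofReal_mul (by positivity), mul_assoc]
  -- `DfInv` need not be measurable; this bound on the Bochner integral needs no integrability
  exact (le_abs_self _).trans <| (norm_integral_le_lintegral_norm _).trans <|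
    ENNReal.toReal_le_of_le_ofReal (by positivity) hlin

end
end
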